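/- arXiv:1704.00688 — 2 statements merged into one kernel-verified Lean document; each statement's English description precedes it below -/
import Mathlib

section
/- The function d(X,Y) = log(1 + ‖X⁻¹·Y − I‖_op) defines a metric (distance function) on the group SU(1,1): it is nonnegative, vanishes iff X = Y, is symmetric, and satisfies the triangle inequality. -/
/-!
With `J = diag(1, -1)` (`pauliZ`), every `X ∈ SU(1,1)` satisfies `X⁻¹ = J Xᴴ J`. Hence
`Y⁻¹X - 1 = J (X⁻¹Y - 1)ᴴ J`, and since `J` is unitary and the operator norm is a C*-norm, the
two sides have the same norm: this is the symmetry. The triangle inequality holds in any normed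
ring: `xy - 1 = (x - 1)(y - 1) + (x - 1) + (y - 1)` gives
`1 + ‖xy - 1‖ ≤ (1 + ‖x - 1‖)(1 + ‖y - 1‖)`, applied to `X⁻¹Z = (X⁻¹Y)(Y⁻¹Z)`.
-/

noncomputable section

/-- The operator norm of a `2 × 2` complex matrix acting on `ℂ²`. -/
def opNorm (X : Matrix (Fin 2) (Fin 2) ℂ) : ℝ :=
  ‖Matrix.toEuclideanCLM (𝕜 := ℂ) (n := Fin 2) X‖

/-- The group SU(1,1), as a set of 2×2 complex matrices. -/
def SU11 : Set (Matrix (Fin 2) (Fin 2) ℂ) :=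
  {X | ∃ a b : ℂ, X = !![a, b; starRingEnd ℂ b, starRingEnd ℂ a] ∧
    ‖a‖ ^ 2 - ‖b‖ ^ 2 = 1}

/-- The distance function on SU(1,1). -/
def dSU (X Y : Matrix (Fin 2) (Fin 2) ℂ) : ℝ :=
  Real.log (1 + opNorm (X⁻¹ * Y - 1))

open Matrix
open scoped Matrix.Norms.L2Operator

theorem log_one_add_norm_eq_zero_iff {E : Type*} [NormedAddCommGroup E] (x : E) :
    Real.log (1 + ‖x‖) = 0 ↔ x = 0 := by
  refine ⟨fun h => ?_, fun h => by rw [h, norm_zero, add_zero, Real.log_one]⟩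
  have := Real.eq_one_of_pos_of_log_eq_zero (by positivity) h
  exact norm_eq_zero.mp (by linarith)

section NormedRing

variable {R : Type*} [NormedRing R]

theorem one_add_norm_mul_sub_one_le (x y : R) :
    1 + ‖x * y - 1‖ ≤ (1 + ‖x - 1‖) * (1 + ‖y - 1‖) := by
  have hxy : x * y - 1 = (x - 1) * (y - 1) + (x - 1) + (y - 1) := by noncomm_ring
  have := norm_mul_le (x - 1) (y - 1)
  have := norm_add₃_le (a := (x - 1) * (y - 1)) (b := x - 1) (c := y - 1)
  rw [hxy]
  nlinarith

theorem log_one_add_norm_mul_sub_one_le (x y : R) :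
    Real.log (1 + ‖x * y - 1‖) ≤ Real.log (1 + ‖x - 1‖) + Real.log (1 + ‖y - 1‖) := by
  rw [← Real.log_mul (by positivity) (by positivity)]
  exact Real.log_le_log (by positivity) (one_add_norm_mul_sub_one_le x y)

end NormedRing

theorem norm_unitary_mul_star_mul_star_sub_one {E : Type*} [NormedRing E] [StarRing E]
    [CStarRing E] {u : E} (hu : u ∈ unitary E) (x : E) :
    ‖u * star x * star u - 1‖ = ‖x - 1‖ := by
  have : u * star x * star u - 1 = u * star (x - 1) * star u := by
    rw [star_sub, star_one, mul_sub, sub_mul, mul_one, Unitary.mul_star_self_of_mem hu]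
  rw [this, CStarRing.norm_mul_mem_unitary _ (Unitary.star_mem hu),
    CStarRing.norm_mem_unitary_mul _ hu, norm_star]

def pauliZ : Matrix (Fin 2) (Fin 2) ℂ := !![1, 0; 0, -1]

theorem pauliZ_mul_self : pauliZ * pauliZ = 1 := by
  rw [pauliZ, mul_fin_two, one_fin_two]
  norm_num

theorem star_pauliZ : star pauliZ = pauliZ := by
  ext i j
  fin_cases i <;> fin_cases j <;> simp [pauliZ]

theorem pauliZ_mem_unitary : pauliZ ∈ unitary (Matrix (Fin 2) (Fin 2) ℂ) :=
  Unitary.mem_iff.mpr ⟨by rw [star_pauliZ, pauliZ_mul_self], by rw [star_pauliZ, pauliZ_mul_self]⟩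

section SU11

variable {X Y Z : Matrix (Fin 2) (Fin 2) ℂ}

theorem mul_pauliZ_conj_eq_one_of_mem_SU11 (hX : X ∈ SU11) :
    X * (pauliZ * Xᴴ * pauliZ) = 1 := by
  obtain ⟨a, b, rfl, h⟩ := hX
  have hab : a * starRingEnd ℂ a - b * starRingEnd ℂ b = 1 := by
    rw [Complex.mul_conj, Complex.mul_conj, Complex.normSq_eq_norm_sq, Complex.normSq_eq_norm_sq]
    exact_mod_cast h
  have hH : (!![a, b; starRingEnd ℂ b, starRingEnd ℂ a])ᴴ =
      !![starRingEnd ℂ a, b; starRingEnd ℂ b, a] := by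
    ext i j
    fin_cases i <;> fin_cases j <;> simp
  rw [pauliZ, hH, mul_fin_two, mul_fin_two, mul_fin_two, one_fin_two]
  ext i j
  fin_cases i <;> fin_cases j <;> simp
  · linear_combination hab
  · ring
  · ring
  · linear_combination hab

theorem inv_eq_pauliZ_conj_of_mem_SU11 (hX : X ∈ SU11) : X⁻¹ = pauliZ * Xᴴ * pauliZ :=
  inv_eq_right_inv (mul_pauliZ_conj_eq_one_of_mem_SU11 hX)

theorem isUnit_det_of_mem_SU11 (hX : X ∈ SU11) : IsUnit X.det :=
  isUnit_det_of_right_inverse (mul_pauliZ_conj_eq_one_of_mem_SU11 hX)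

theorem inv_mul_eq_pauliZ_conj_star_inv_mul (hX : X ∈ SU11) (hY : Y ∈ SU11) :
    Y⁻¹ * X = pauliZ * star (X⁻¹ * Y) * star pauliZ := by
  rw [inv_eq_pauliZ_conj_of_mem_SU11 hX, inv_eq_pauliZ_conj_of_mem_SU11 hY]
  simp only [← star_eq_conjTranspose, star_mul, star_star, star_pauliZ, mul_assoc,
    pauliZ_mul_self, mul_one]

-- `opNorm` is by definition the norm of the scoped C*-algebra structure `Matrix.Norms.L2Operator`.
theorem dSU_eq (X Y : Matrix (Fin 2) (Fin 2) ℂ) : dSU X Y = Real.log (1 + ‖X⁻¹ * Y - 1‖) := rfl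

theorem dSU_nonneg (X Y : Matrix (Fin 2) (Fin 2) ℂ) : 0 ≤ dSU X Y :=
  Real.log_nonneg (le_add_of_nonneg_right (norm_nonneg _))

theorem dSU_eq_zero_iff (hX : X ∈ SU11) : dSU X Y = 0 ↔ X = Y := by
  have hdet := isUnit_det_of_mem_SU11 hX
  rw [dSU_eq, log_one_add_norm_eq_zero_iff, sub_eq_zero]
  constructor
  · intro h
    rw [← mul_nonsing_inv_cancel_left X Y hdet, h, mul_one]
  · rintro rfl
    exact nonsing_inv_mul X hdet

theorem dSU_comm (hX : X ∈ SU11) (hY : Y ∈ SU11) : dSU X Y = dSU Y X := by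
  rw [dSU_eq, dSU_eq, inv_mul_eq_pauliZ_conj_star_inv_mul hX hY,
    norm_unitary_mul_star_mul_star_sub_one pauliZ_mem_unitary]

theorem dSU_le_add (hY : Y ∈ SU11) : dSU X Z ≤ dSU X Y + dSU Y Z := by
  have : X⁻¹ * Z = X⁻¹ * Y * (Y⁻¹ * Z) := by
    rw [mul_assoc, mul_nonsing_inv_cancel_left Y Z (isUnit_det_of_mem_SU11 hY)]
  rw [dSU_eq, this]
  exact log_one_add_norm_mul_sub_one_le _ _

end SU11

theorem dSU_is_metric_on_SU11 :
    (∀ X ∈ SU11, ∀ Y ∈ SU11, 0 ≤ dSU X Y) ∧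
    (∀ X ∈ SU11, ∀ Y ∈ SU11, (dSU X Y = 0 ↔ X = Y)) ∧
    (∀ X ∈ SU11, ∀ Y ∈ SU11, dSU X Y = dSU Y X) ∧
    (∀ X ∈ SU11, ∀ Y ∈ SU11, ∀ Z ∈ SU11, dSU X Z ≤ dSU X Y + dSU Y Z) :=
  ⟨fun X _ Y _ => dSU_nonneg X Y, fun _ hX _ _ => dSU_eq_zero_iff hX,
    fun _ hX _ hY => dSU_comm hX hY, fun _ _ _ hY _ _ => dSU_le_add hY⟩

end
end

section
/- For F ∈ 𝔻, z on the unit circle, and n ∈ ℤ, the matrix logarithm of the transfer matrix T_n = (1 − |F|²)^{−1/2}·(1, F zⁿ; conj(F) z^{−n}, 1) equals g(F)·(0, F zⁿ; conj(F) z^{−n}, 0), where g(t) = (2|t|)^{−1}·log((1+|t|)/(1−|t|)) (and g(0)=1). Consequently ‖log T_n − (0, F zⁿ; conj(F) z^{−n}, 0)‖_op = |g(F) − 1|·|F|. -/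
/-!
The jump matrix `A = (0, w; conj w, 0)` with `|w| = |F| =: r` squares to `r² • 1`, so for `r ≠ 0`
the matrix `J = r⁻¹ • A` is an involution and `exp (s • J) = cosh s • 1 + sinh s • J`. The choice
of `g` makes `g(F) · r = artanh r`, and `cosh (artanh r) = 1 / √(1 - r²)`,
`sinh (artanh r) = r / √(1 - r²)`, which assembles to `T_n = (1 - r²)^{-1/2} • (1 + A)`.
Being Hermitian with `A² = r² • 1`, `A` has operator norm `r` by the C*-identity.
-/

noncomputable section

def transfer (F z : ℂ) (n : ℤ) : Matrix (Fin 2) (Fin 2) ℂ :=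
  (Real.sqrt (1 - ‖F‖ ^ 2))⁻¹ •
    !![1, F * z ^ n; starRingEnd ℂ F * z ^ (-n), 1]

/-- The linearized (Lie algebra) jump matrix `(0, F zⁿ; conj(F) z^{-n}, 0)`. -/
def linA (F z : ℂ) (n : ℤ) : Matrix (Fin 2) (Fin 2) ℂ :=
  !![0, F * z ^ n; starRingEnd ℂ F * z ^ (-n), 0]

def gFun (t : ℂ) : ℝ :=
  if t = 0 then 1
  else (2 * ‖t‖)⁻¹ * Real.log ((1 + ‖t‖) / (1 - ‖t‖))

theorem NormedSpace.exp_smul_of_mul_self_eq_one {𝔸 : Type*} [Ring 𝔸] [Algebra ℝ 𝔸]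
    [TopologicalSpace 𝔸] [IsTopologicalRing 𝔸] [ContinuousSMul ℝ 𝔸] [T2Space 𝔸]
    {J : 𝔸} (hJ : J * J = 1) (s : ℝ) :
    NormedSpace.exp (s • J) = Real.cosh s • 1 + Real.sinh s • J := by
  have hJ2 : J ^ 2 = 1 := by rw [sq, hJ]
  rw [NormedSpace.exp_eq_tsum ℝ]
  refine HasSum.tsum_eq (HasSum.even_add_odd ?_ ?_)
  · convert (Real.hasSum_cosh s).smul_const (1 : 𝔸) using 2 with k
    rw [smul_pow, pow_mul J, hJ2, one_pow, smul_smul, div_eq_inv_mul]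
  · convert (Real.hasSum_sinh s).smul_const J using 2 with k
    rw [smul_pow, pow_succ J, pow_mul J, hJ2, one_pow, one_mul, smul_smul, div_eq_inv_mul]

theorem gFun_mul_norm {F : ℂ} (hF : ‖F‖ ≤ 1) : gFun F * ‖F‖ = Real.artanh ‖F‖ := by
  rcases eq_or_ne F 0 with rfl | hF0
  · simp [Real.artanh_zero]
  · rw [gFun, if_neg hF0, Real.artanh_eq_half_log ⟨by linarith [norm_nonneg F], hF⟩]
    field_simp [norm_ne_zero_iff.mpr hF0]

theorem antidiag_mul_self (b : ℂ) :
    !![0, b; starRingEnd ℂ b, 0] * !![0, b; starRingEnd ℂ b, 0] =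
      (‖b‖ ^ 2 : ℝ) • (1 : Matrix (Fin 2) (Fin 2) ℂ) := by
  have hb : b * starRingEnd ℂ b = (‖b‖ ^ 2 : ℝ) := by
    rw [Complex.mul_conj, Complex.normSq_eq_norm_sq]
  ext i j
  fin_cases i <;> fin_cases j <;> simp [Matrix.one_fin_two, hb, mul_comm (starRingEnd ℂ b)]

theorem opNorm_antidiag (b : ℂ) : opNorm !![0, b; starRingEnd ℂ b, 0] = ‖b‖ := by
  set T := Matrix.toEuclideanCLM (𝕜 := ℂ) (n := Fin 2) !![0, b; starRingEnd ℂ b, 0]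
  have hT : star T * T = ((‖b‖ ^ 2 : ℝ) : ℂ) • 1 := by
    have hherm : star !![0, b; starRingEnd ℂ b, 0] = !![0, b; starRingEnd ℂ b, 0] := by
      ext i j
      fin_cases i <;> fin_cases j <;> simp
    rw [← map_star, ← map_mul, hherm, antidiag_mul_self, ← Complex.coe_smul, map_smul, map_one]
  have hsq : ‖T‖ ^ 2 = ‖b‖ ^ 2 := by
    rw [sq, ← CStarRing.norm_star_mul_self, hT, norm_smul, norm_one, mul_one,
      Complex.norm_real, Real.norm_of_nonneg (sq_nonneg _)]
  exact (pow_left_inj₀ (norm_nonneg _) (norm_nonneg _) two_ne_zero).mp hsq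

theorem opNorm_smul (c : ℂ) (X : Matrix (Fin 2) (Fin 2) ℂ) :
    opNorm (c • X) = ‖c‖ * opNorm X := by
  simp only [opNorm, map_smul, norm_smul]

theorem norm_mul_zpow_of_norm_eq_one {𝕜 : Type*} [NormedDivisionRing 𝕜] {z : 𝕜} (hz : ‖z‖ = 1)
    (F : 𝕜) (n : ℤ) : ‖F * z ^ n‖ = ‖F‖ := by
  rw [norm_mul, norm_zpow, hz, one_zpow, mul_one]

theorem linA_eq_antidiag {z : ℂ} (hz : ‖z‖ = 1) (F : ℂ) (n : ℤ) :
    linA F z n = !![0, F * z ^ n; starRingEnd ℂ (F * z ^ n), 0] := by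
  have hconj : starRingEnd ℂ z = z⁻¹ := by
    rw [Complex.inv_def, Complex.normSq_eq_norm_sq, hz]
    simp
  rw [linA, map_mul, map_zpow₀, hconj, inv_zpow, zpow_neg]

theorem linA_mul_self {z : ℂ} (hz : ‖z‖ = 1) (F : ℂ) (n : ℤ) :
    linA F z n * linA F z n = (‖F‖ ^ 2 : ℝ) • 1 := by
  rw [linA_eq_antidiag hz, antidiag_mul_self, norm_mul_zpow_of_norm_eq_one hz]

theorem opNorm_linA {z : ℂ} (hz : ‖z‖ = 1) (F : ℂ) (n : ℤ) : opNorm (linA F z n) = ‖F‖ := by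
  rw [linA_eq_antidiag hz, opNorm_antidiag, norm_mul_zpow_of_norm_eq_one hz]

theorem transfer_eq_smul_one_add_linA (F z : ℂ) (n : ℤ) :
    transfer F z n = (Real.sqrt (1 - ‖F‖ ^ 2))⁻¹ • (1 + linA F z n) := by
  rw [transfer, linA, Matrix.one_fin_two]
  simp

theorem exp_gFun_smul_linA {F z : ℂ} (n : ℤ) (hF : ‖F‖ < 1) (hz : ‖z‖ = 1) :
    NormedSpace.exp (gFun F • linA F z n) = transfer F z n := by
  rcases eq_or_ne F 0 with rfl | hF0
  · have hlinA : linA 0 z n = 0 := by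
      ext i j
      fin_cases i <;> fin_cases j <;> simp [linA]
    simp [transfer_eq_smul_one_add_linA, hlinA]
  have hr : ‖F‖ ≠ 0 := norm_ne_zero_iff.mpr hF0
  have hJ : (‖F‖⁻¹ • linA F z n) * (‖F‖⁻¹ • linA F z n) = 1 := by
    rw [smul_mul_smul, linA_mul_self hz, smul_smul]
    field_simp
    exact one_smul _ _
  have hmem : ‖F‖ ∈ Set.Ioo (-1 : ℝ) 1 := ⟨by linarith [norm_nonneg F], hF⟩
  calc NormedSpace.exp (gFun F • linA F z n)
      = NormedSpace.exp (Real.artanh ‖F‖ • (‖F‖⁻¹ • linA F z n)) := by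
        rw [← gFun_mul_norm hF.le, smul_smul, mul_inv_cancel_right₀ hr]
    _ = transfer F z n := by
        rw [NormedSpace.exp_smul_of_mul_self_eq_one hJ, Real.cosh_artanh hmem,
          Real.sinh_artanh hmem, transfer_eq_smul_one_add_linA, smul_smul, smul_add]
        congr 1
        · rw [one_div]
        · congr 1
          field_simp

/-- The principal matrix logarithm of the transfer matrix `T_n` is `g(F)` times the
linearized jump matrix: equivalently, `T_n = exp (g(F) • (0, F zⁿ; conj F z^{−n}, 0))`;
consequently `‖log T_n − (0, F zⁿ; conj F z^{−n}, 0)‖_op = |g(F) − 1|·|F|`. -/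
theorem log_transfer (F z : ℂ) (n : ℤ)
    (hF : ‖F‖ < 1) (hz : ‖z‖ = 1) :
    NormedSpace.exp (gFun F • linA F z n) = transfer F z n ∧
      opNorm (gFun F • linA F z n - linA F z n) = |gFun F - 1| * ‖F‖ := by
  refine ⟨exp_gFun_smul_linA n hF hz, ?_⟩
  have hsub : gFun F • linA F z n - linA F z n = ((gFun F - 1 : ℝ) : ℂ) • linA F z n := by
    rw [Complex.coe_smul, sub_smul, one_smul]
  rw [hsub, opNorm_smul, opNorm_linA hz, Complex.norm_real, Real.norm_eq_abs]

end
end
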